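/- Let (p_k) be the pairwise disjoint Cuculescu projections and q_{k} the Cuculescu projections at level λ for f ∈ A_{c,+}, and set g_{k,s} = p_k df_{k+s} q_{k+s-1} + q_{k+s-1} df_{k+s} p_k where df_j = f_j - f_{j-1}. Then the family (g_{k,s})_{k,s≥1} is pairwise orthogonal in L₂(A): φ(g_{k,s} g_{k',s'}^*) = 0 unless (k,s) = (k',s'). -/

import Mathlib

open MeasureTheory Matrix
open scoped ComplexOrder

/-- The generation-`k` dyadic cube containing `x` (side length `2^{-k}`). -/
def dyadicCubeOf (n : ℕ) (k : ℤ) (x : Fin n → ℝ) : Set (Fin n → ℝ) :=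
  {y | ∀ i, ⌊(2 : ℝ) ^ k * y i⌋ = ⌊(2 : ℝ) ^ k * x i⌋}

/-- The dyadic conditional expectation `E_k f (x)` of a matrix-valued function. -/
noncomputable def mDyadicAvg {n N : ℕ} (k : ℤ)
    (f : (Fin n → ℝ) → Matrix (Fin N) (Fin N) ℂ) (x : Fin n → ℝ) :
    Matrix (Fin N) (Fin N) ℂ :=
  Matrix.of fun i j => (2 : ℝ) ^ ((n : ℤ) * k) • ∫ y in dyadicCubeOf n k x, f y i j

/-- The martingale difference `df_j = E_j f - E_{j-1} f`. -/
noncomputable def mDiff {n N : ℕ} (j : ℤ)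
    (f : (Fin n → ℝ) → Matrix (Fin N) (Fin N) ℂ) (x : Fin n → ℝ) :
    Matrix (Fin N) (Fin N) ℂ :=
  mDyadicAvg j f x - mDyadicAvg (j - 1) f x

/-!
If `k + s = k' + s'` then `k ≠ k'`, and after moving `p_k` to the back by cyclicity of the trace,
every term of `g_{k,s} g_{k',s'}^*` contains one of `p_{k'} p_k`, `q_{k+s-1} p_{k'}`,
`p_k q_{k+s-1}`, `p_k p_{k'}`, which vanish because the `q_j` decrease.
Otherwise, say `k' + s' < k + s`. Cyclicity gives `tr (g_{k,s} g_{k',s'}^*) = tr (df_{k+s} B)` where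
`B` is built from `q_j` with `j ≤ k + s - 1` and from `df_{k'+s'}`, so `B` is constant on the dyadic
cubes of generation `k + s - 1`. Integrating cube by cube, `∫ tr (E_j f · B) = ∫ tr (f · B)` for
`j = k + s` and `j = k + s - 1`, hence `∫ tr (df_{k+s} B) = 0`. The case `k + s < k' + s'`
follows by taking adjoints.
-/

section Dyadic

variable {n : ℕ}

noncomputable def dyadicIndex (k : ℤ) (x : Fin n → ℝ) : Fin n → ℤ :=
  fun i => ⌊(2 : ℝ) ^ k * x i⌋

/-- `F` is measurable for the generation-`k` dyadic σ-algebra `𝒜_k`, i.e. constant on its cubes. -/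
def DyadicAdapted {β : Type*} (k : ℤ) (F : (Fin n → ℝ) → β) : Prop :=
  F.FactorsThrough (dyadicIndex k)

lemma measurable_dyadicIndex (k : ℤ) : Measurable (dyadicIndex (n := n) k) :=
  measurable_pi_lambda _ fun i =>
    Int.measurable_floor.comp (measurable_const.mul (measurable_pi_apply i))

lemma dyadicCubeOf_eq_preimage (k : ℤ) (x : Fin n → ℝ) :
    dyadicCubeOf n k x = dyadicIndex k ⁻¹' {dyadicIndex k x} :=
  Set.ext fun _ => funext_iff.symm

lemma floor_two_zpow_mul_eq_ediv {m k : ℤ} (hmk : m ≤ k) (t : ℝ) :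
    ⌊(2 : ℝ) ^ m * t⌋ = ⌊(2 : ℝ) ^ k * t⌋ / 2 ^ (k - m).toNat := by
  obtain ⟨d, rfl⟩ : ∃ d : ℕ, k = m + d := ⟨(k - m).toNat, by omega⟩
  have h : (2 : ℝ) ^ m * t = (2 : ℝ) ^ (m + d) * t / ((2 ^ d : ℕ) : ℝ) := by
    rw [zpow_add₀ two_ne_zero, zpow_natCast]
    push_cast
    field_simp
  rw [h, Int.floor_div_natCast]
  simp

lemma DyadicAdapted.mono {β : Type*} {m k : ℤ} {F : (Fin n → ℝ) → β}
    (hF : DyadicAdapted m F) (hmk : m ≤ k) : DyadicAdapted k F := fun x y hxy =>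
  hF <| funext fun i => by
    have hi := congrFun hxy i
    simp only [dyadicIndex] at hi
    simp only [dyadicIndex, floor_two_zpow_mul_eq_ediv hmk, hi]

lemma DyadicAdapted.exists_eq_comp {β : Type*} {k : ℤ} {F : (Fin n → ℝ) → β}
    (hF : DyadicAdapted k F) : ∃ G : (Fin n → ℤ) → β, F = G ∘ dyadicIndex k :=
  ⟨Function.extend _ F fun _ => F 0, funext fun x => (hF.extend_apply _ x).symm⟩

lemma DyadicAdapted.stronglyMeasurable {β : Type*} [TopologicalSpace β] {k : ℤ}
    {F : (Fin n → ℝ) → β} (hF : DyadicAdapted k F) : StronglyMeasurable F := by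
  obtain ⟨G, rfl⟩ := hF.exists_eq_comp
  exact StronglyMeasurable.of_discrete.comp_measurable (measurable_dyadicIndex k)

lemma DyadicAdapted.exists_bound {E : Type*} [Norm E] {k : ℤ} {F : (Fin n → ℝ) → E}
    (hF : DyadicAdapted k F) {S : Set (Fin n → ℤ)} (hS : S.Finite) :
    ∃ M, ∀ x, dyadicIndex k x ∈ S → ‖F x‖ ≤ M := by
  obtain ⟨G, rfl⟩ := hF.exists_eq_comp
  obtain ⟨M, hM⟩ := (hS.image fun c => ‖G c‖).bddAbove
  exact ⟨M, fun x hx => hM ⟨_, hx, rfl⟩⟩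

lemma dyadicIndex_preimage_singleton (k : ℤ) (c : Fin n → ℤ) :
    dyadicIndex k ⁻¹' {c} =
      Set.univ.pi fun i => Set.Ico (c i * (2 : ℝ) ^ (-k)) ((c i + 1) * (2 : ℝ) ^ (-k)) := by
  have h2k : (0 : ℝ) < 2 ^ k := by positivity
  ext x
  simp only [Set.mem_preimage, Set.mem_singleton_iff, funext_iff, dyadicIndex, Set.mem_pi,
    Set.mem_univ, true_implies, Set.mem_Ico, Int.floor_eq_iff, _root_.zpow_neg,
    ← div_eq_mul_inv, div_le_iff₀ h2k, lt_div_iff₀ h2k, mul_comm (x _)]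

lemma volume_dyadicIndex_preimage_singleton (k : ℤ) (c : Fin n → ℤ) :
    volume (dyadicIndex k ⁻¹' {c}) = ENNReal.ofReal ((2 : ℝ) ^ (-k)) ^ n := by
  simp only [dyadicIndex_preimage_singleton, volume_pi_pi, Real.volume_Ico, add_mul, one_mul,
    add_sub_cancel_left, Finset.prod_const, Finset.card_univ, Fintype.card_fin]

lemma measureReal_dyadicIndex_preimage_singleton (k : ℤ) (c : Fin n → ℤ) :
    volume.real (dyadicIndex k ⁻¹' {c}) = (2 : ℝ) ^ (-((n : ℤ) * k)) := by
  rw [measureReal_def, volume_dyadicIndex_preimage_singleton, ENNReal.toReal_pow,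
    ENNReal.toReal_ofReal (by positivity), ← zpow_natCast, ← _root_.zpow_mul]
  ring_nf

lemma volume_dyadicIndex_preimage_lt_top (k : ℤ) {S : Set (Fin n → ℤ)} (hS : S.Finite) :
    volume (dyadicIndex k ⁻¹' S) < ⊤ := by
  rw [← Set.biUnion_preimage_singleton]
  refine measure_biUnion_lt_top hS fun c _ => ?_
  rw [volume_dyadicIndex_preimage_singleton]
  exact ENNReal.pow_lt_top ENNReal.ofReal_lt_top

lemma finite_dyadicIndex_image_closedBall (k : ℤ) (R : ℝ) :
    (dyadicIndex k '' Metric.closedBall (0 : Fin n → ℝ) R).Finite := by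
  refine (Set.finite_Icc (fun _ => ⌊(2 : ℝ) ^ k * -R⌋) fun _ => ⌊(2 : ℝ) ^ k * R⌋).subset ?_
  rintro _ ⟨x, hx, rfl⟩
  have hxi : ∀ i, |x i| ≤ R := fun i =>
    (norm_le_pi_norm x i).trans (mem_closedBall_zero_iff.mp hx)
  have h2k : (0 : ℝ) ≤ 2 ^ k := by positivity
  exact ⟨fun i => Int.floor_mono (mul_le_mul_of_nonneg_left (neg_le_of_abs_le (hxi i)) h2k),
    fun i => Int.floor_mono (mul_le_mul_of_nonneg_left (le_of_abs_le (hxi i)) h2k)⟩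

lemma DyadicAdapted.integrable {E : Type*} [NormedAddCommGroup E] {k : ℤ}
    {F : (Fin n → ℝ) → E} (hF : DyadicAdapted k F) {S : Set (Fin n → ℤ)} (hS : S.Finite)
    (hsupp : Function.support F ⊆ dyadicIndex k ⁻¹' S) : Integrable F := by
  obtain ⟨M, hM⟩ := hF.exists_bound hS
  rw [← integrableOn_iff_integrable_of_support_subset hsupp]
  exact Measure.integrableOn_of_bounded (volume_dyadicIndex_preimage_lt_top k hS).ne
    hF.stronglyMeasurable.aestronglyMeasurable
    (ae_restrict_of_forall_mem (measurable_dyadicIndex k hS.measurableSet) hM)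

end Dyadic

section Averaging

variable {n : ℕ}

noncomputable def dyadicAvg (k : ℤ) (h : (Fin n → ℝ) → ℂ) (x : Fin n → ℝ) : ℂ :=
  (2 : ℝ) ^ ((n : ℤ) * k) • ∫ y in dyadicCubeOf n k x, h y

lemma dyadicAdapted_dyadicAvg (k : ℤ) (h : (Fin n → ℝ) → ℂ) :
    DyadicAdapted k (dyadicAvg k h) := fun x y hxy => by
  simp only [dyadicAvg, dyadicCubeOf_eq_preimage, hxy]

lemma support_dyadicAvg_subset {k : ℤ} {h : (Fin n → ℝ) → ℂ} {S : Set (Fin n → ℤ)}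
    (hsupp : Function.support h ⊆ dyadicIndex k ⁻¹' S) :
    Function.support (dyadicAvg k h) ⊆ dyadicIndex k ⁻¹' S := by
  intro x hx
  by_contra hxS
  refine hx ?_
  rw [dyadicAvg, dyadicCubeOf_eq_preimage, setIntegral_eq_zero_of_forall_eq_zero, smul_zero]
  intro y hy
  by_contra hy0
  have hyS := hsupp hy0
  rw [Set.mem_preimage, Set.mem_singleton_iff.mp hy] at hyS
  exact hxS hyS

lemma setIntegral_dyadicAvg_mul {k : ℤ} {h g : (Fin n → ℝ) → ℂ} (hg : DyadicAdapted k g)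
    (c : Fin n → ℤ) :
    ∫ x in dyadicIndex k ⁻¹' {c}, dyadicAvg k h x * g x =
      ∫ x in dyadicIndex k ⁻¹' {c}, h x * g x := by
  obtain ⟨G, rfl⟩ := hg.exists_eq_comp
  have hc := measurable_dyadicIndex (n := n) k (measurableSet_singleton c)
  have hE : Set.EqOn (fun x => dyadicAvg k h x * (G ∘ dyadicIndex k) x)
      (fun _ => ((2 : ℝ) ^ ((n : ℤ) * k) • ∫ y in dyadicIndex k ⁻¹' {c}, h y) * G c)
      (dyadicIndex k ⁻¹' {c}) := fun x hx => by
    simp only [Function.comp_apply, dyadicAvg, dyadicCubeOf_eq_preimage,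
      Set.mem_singleton_iff.mp hx]
  have hG : Set.EqOn (fun x => h x * (G ∘ dyadicIndex k) x) (fun x => h x * G c)
      (dyadicIndex k ⁻¹' {c}) := fun x hx => by
    simp only [Function.comp_apply, Set.mem_singleton_iff.mp hx]
  rw [setIntegral_congr_fun hc hE, setIntegral_congr_fun hc hG, setIntegral_const,
    integral_mul_const, measureReal_dyadicIndex_preimage_singleton, smul_mul_assoc, smul_smul,
    ← zpow_add₀ two_ne_zero, neg_add_cancel, zpow_zero, one_smul]

lemma integral_eq_tsum_setIntegral_dyadicIndex_preimage {E : Type*} [NormedAddCommGroup E]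
    [NormedSpace ℝ E] (k : ℤ) {F : (Fin n → ℝ) → E} (hF : Integrable F) :
    ∫ x, F x = ∑' c, ∫ x in dyadicIndex k ⁻¹' {c}, F x := by
  have hU : ⋃ c, dyadicIndex (n := n) k ⁻¹' {c} = Set.univ := by
    rw [← Set.preimage_iUnion, Set.iUnion_of_singleton, Set.preimage_univ]
  rw [← integral_iUnion (fun c => measurable_dyadicIndex k (measurableSet_singleton c))
    (pairwise_disjoint_fiber _) (by rw [hU]; exact hF.integrableOn), hU, Measure.restrict_univ]

lemma MeasureTheory.Integrable.mul_dyadicAdapted {k : ℤ} {h g : (Fin n → ℝ) → ℂ} (hh : Integrable h)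
    {S : Set (Fin n → ℤ)} (hS : S.Finite) (hsupp : Function.support h ⊆ dyadicIndex k ⁻¹' S)
    (hg : DyadicAdapted k g) : Integrable fun x => h x * g x := by
  obtain ⟨M, hM⟩ := hg.exists_bound hS
  rw [← integrableOn_iff_integrable_of_support_subset
    ((Function.support_mul_subset_left _ _).trans hsupp)]
  exact hh.integrableOn.mul_bdd hg.stronglyMeasurable.aestronglyMeasurable
    (ae_restrict_of_forall_mem (measurable_dyadicIndex k hS.measurableSet) hM)

lemma integrable_dyadicAvg_mul {k : ℤ} {h g : (Fin n → ℝ) → ℂ} {R : ℝ}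
    (hsupp : Function.support h ⊆ Metric.closedBall 0 R) (hg : DyadicAdapted k g) :
    Integrable fun x => dyadicAvg k h x * g x :=
  DyadicAdapted.integrable (fun x y hxy => by rw [dyadicAdapted_dyadicAvg k h hxy, hg hxy])
    (finite_dyadicIndex_image_closedBall k R)
    ((Function.support_mul_subset_left _ _).trans
      (support_dyadicAvg_subset (hsupp.trans (Set.subset_preimage_image _ _))))

lemma integral_dyadicAvg_mul {m k : ℤ} (hmk : m ≤ k) {h g : (Fin n → ℝ) → ℂ}
    (hh : Integrable h) {R : ℝ} (hsupp : Function.support h ⊆ Metric.closedBall 0 R)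
    (hg : DyadicAdapted m g) :
    ∫ x, dyadicAvg k h x * g x = ∫ x, h x * g x := by
  have hgk := hg.mono hmk
  rw [integral_eq_tsum_setIntegral_dyadicIndex_preimage k (integrable_dyadicAvg_mul hsupp hgk),
    integral_eq_tsum_setIntegral_dyadicIndex_preimage k (hh.mul_dyadicAdapted
      (finite_dyadicIndex_image_closedBall k R) (hsupp.trans (Set.subset_preimage_image _ _)) hgk)]
  exact tsum_congr fun c => setIntegral_dyadicAvg_mul hgk c

lemma integrable_dyadicDiff_mul {j : ℤ} {h g : (Fin n → ℝ) → ℂ} {R : ℝ}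
    (hsupp : Function.support h ⊆ Metric.closedBall 0 R) (hg : DyadicAdapted (j - 1) g) :
    Integrable fun x => (dyadicAvg j h x - dyadicAvg (j - 1) h x) * g x := by
  simp only [sub_mul]
  exact (integrable_dyadicAvg_mul hsupp (hg.mono (by omega))).sub
    (integrable_dyadicAvg_mul hsupp hg)

lemma integral_dyadicDiff_mul_eq_zero {j : ℤ} {h g : (Fin n → ℝ) → ℂ} (hh : Integrable h)
    {R : ℝ} (hsupp : Function.support h ⊆ Metric.closedBall 0 R) (hg : DyadicAdapted (j - 1) g) :
    ∫ x, (dyadicAvg j h x - dyadicAvg (j - 1) h x) * g x = 0 := by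
  simp only [sub_mul]
  rw [integral_sub (integrable_dyadicAvg_mul hsupp (hg.mono (by omega)))
      (integrable_dyadicAvg_mul hsupp hg),
    integral_dyadicAvg_mul (by omega) hh hsupp hg, integral_dyadicAvg_mul le_rfl hh hsupp hg,
    sub_self]

end Averaging

section MatrixValued

variable {n N : ℕ}

lemma dyadicAdapted_mDiff (j : ℤ) (f : (Fin n → ℝ) → Matrix (Fin N) (Fin N) ℂ) :
    DyadicAdapted j (mDiff j f) := by
  have hAvg : ∀ k, DyadicAdapted k (mDyadicAvg k f) := fun k x y hxy => by
    simp only [mDyadicAvg, dyadicCubeOf_eq_preimage, hxy]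
  intro x y hxy
  rw [mDiff, mDiff, hAvg j hxy, (hAvg (j - 1)).mono (by omega) hxy]

lemma integral_trace_mDiff_mul_eq_zero {j : ℤ} {f : (Fin n → ℝ) → Matrix (Fin N) (Fin N) ℂ}
    (hf : ∀ a b, Integrable fun x => f x a b) {R : ℝ}
    (hsupp : Function.support f ⊆ Metric.closedBall 0 R)
    {B : (Fin n → ℝ) → Matrix (Fin N) (Fin N) ℂ} (hB : DyadicAdapted (j - 1) B) :
    ∫ x, trace (mDiff j f x * B x) = 0 := by
  have hsupp_ab : ∀ a b, Function.support (fun x => f x a b) ⊆ Metric.closedBall 0 R :=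
    fun a b => (Function.support_comp_subset (g := fun A : Matrix _ _ ℂ => A a b) rfl f).trans hsupp
  have hB_ab : ∀ a b, DyadicAdapted (j - 1) fun x => B x b a := fun a b x y hxy => by
    change B x b a = B y b a
    rw [hB hxy]
  have hentry : ∀ x a b, mDiff j f x a b =
      dyadicAvg j (fun y => f y a b) x - dyadicAvg (j - 1) (fun y => f y a b) x :=
    fun _ _ _ => rfl
  simp only [Matrix.trace, Matrix.diag, Matrix.mul_apply, hentry]
  rw [integral_finsetSum _ fun a _ => integrable_finsetSum _ fun b _ =>
    integrable_dyadicDiff_mul (hsupp_ab a b) (hB_ab a b)]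
  refine Finset.sum_eq_zero fun a _ => ?_
  rw [integral_finsetSum _ fun b _ => integrable_dyadicDiff_mul (hsupp_ab a b) (hB_ab a b)]
  exact Finset.sum_eq_zero fun b _ =>
    integral_dyadicDiff_mul_eq_zero (hf a b) (hsupp_ab a b) (hB_ab a b)

end MatrixValued

lemma Matrix.PosSemidef.norm_apply_le_sqrt_mul_sqrt {ι : Type*} [Fintype ι] [DecidableEq ι]
    {A : Matrix ι ι ℂ} (hA : A.PosSemidef) (a b : ι) :
    ‖A a b‖ ≤ √(A a a).re * √(A b b).re := by
  let _ := A.toSeminormedAddCommGroup hA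
  let _ := A.toInnerProductSpace hA
  have hinner : ∀ i j, inner ℂ (Pi.single i 1 : ι → ℂ) (Pi.single j 1) = A i j := fun i j => by
    change (A *ᵥ Pi.single j 1) ⬝ᵥ star (Pi.single i 1) = A i j
    simp
  have h := norm_inner_le_norm (𝕜 := ℂ) (Pi.single a 1 : ι → ℂ) (Pi.single b 1)
  rwa [norm_eq_sqrt_re_inner (𝕜 := ℂ) (Pi.single a 1 : ι → ℂ),
    norm_eq_sqrt_re_inner (𝕜 := ℂ) (Pi.single b 1 : ι → ℂ), hinner, hinner, hinner] at h

lemma Matrix.PosSemidef.norm_apply_le {ι : Type*} [Fintype ι] [DecidableEq ι]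
    {A : Matrix ι ι ℂ} (hA : A.PosSemidef) {C : ℝ} (hC : (C • 1 - A).PosSemidef) (a b : ι) :
    ‖A a b‖ ≤ C := by
  have hdiag : ∀ i, 0 ≤ (A i i).re ∧ (A i i).re ≤ C := fun i => by
    have h0 := Complex.le_def.mp (hA.diag_nonneg (i := i))
    have h1 := Complex.le_def.mp (hC.diag_nonneg (i := i))
    simp only [sub_apply, smul_apply, one_apply_eq, Complex.zero_re, Complex.sub_re,
      Complex.real_smul, Complex.mul_re, Complex.ofReal_re, Complex.ofReal_im,
      Complex.one_re, Complex.one_im] at h0 h1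
    constructor <;> linarith [h0.1, h1.1]
  calc ‖A a b‖ ≤ √(A a a).re * √(A b b).re := hA.norm_apply_le_sqrt_mul_sqrt a b
    _ ≤ √C * √C := mul_le_mul (Real.sqrt_le_sqrt (hdiag a).2) (Real.sqrt_le_sqrt (hdiag b).2)
        (Real.sqrt_nonneg _) (Real.sqrt_nonneg _)
    _ = C := Real.mul_self_sqrt ((hdiag a).1.trans (hdiag a).2)

lemma integrable_apply_of_posSemidef {X ι : Type*} [PseudoMetricSpace X] [ProperSpace X]
    [MeasurableSpace X] {μ : Measure X} [IsFiniteMeasureOnCompacts μ] [Fintype ι] [DecidableEq ι]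
    {f : X → Matrix ι ι ℂ} (hmeas : ∀ a b, Measurable fun x => f x a b)
    (hpos : ∀ x, (f x).PosSemidef) {C : ℝ} (hC : ∀ x, (C • 1 - f x).PosSemidef) {x₀ : X} {R : ℝ}
    (hsupp : Function.support f ⊆ Metric.closedBall x₀ R) (a b : ι) :
    Integrable (fun x => f x a b) μ := by
  have hsupp_ab : Function.support (fun x => f x a b) ⊆ Metric.closedBall x₀ R :=
    (Function.support_comp_subset (g := fun A : Matrix ι ι ℂ => A a b) rfl f).trans hsupp
  rw [← integrableOn_iff_integrable_of_support_subset hsupp_ab]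
  exact Measure.integrableOn_of_bounded measure_closedBall_lt_top.ne
    (hmeas a b).aestronglyMeasurable (ae_of_all _ fun x => (hpos x).norm_apply_le (hC x) a b)

section Projections

variable {R : Type*} [Ring R] {q : ℤ → R}

lemma sub_mul_eq_zero_of_le (hq : ∀ j k : ℤ, j ≤ k → q k * q j = q k ∧ q j * q k = q k)
    {k m : ℤ} (hkm : k ≤ m) : (q (k - 1) - q k) * q m = 0 := by
  rw [sub_mul, (hq _ _ (by omega)).2, (hq _ _ hkm).2, sub_self]

lemma mul_sub_eq_zero_of_le (hq : ∀ j k : ℤ, j ≤ k → q k * q j = q k ∧ q j * q k = q k)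
    {k m : ℤ} (hkm : k ≤ m) : q m * (q (k - 1) - q k) = 0 := by
  rw [mul_sub, (hq _ _ (by omega)).1, (hq _ _ hkm).1, sub_self]

lemma sub_mul_sub_eq_zero_of_ne (hq : ∀ j k : ℤ, j ≤ k → q k * q j = q k ∧ q j * q k = q k)
    {k k' : ℤ} (hne : k ≠ k') : (q (k - 1) - q k) * (q (k' - 1) - q k') = 0 := by
  rcases hne.lt_or_gt with h | h
  · rw [mul_sub, sub_mul_eq_zero_of_le hq (by omega : k ≤ k' - 1), sub_mul_eq_zero_of_le hq h.le,
      sub_self]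
  · rw [sub_mul, mul_sub_eq_zero_of_le hq (by omega : k' ≤ k - 1), mul_sub_eq_zero_of_le hq h.le,
      sub_self]

end Projections

section TraceAlgebra

variable {ι R : Type*} [Fintype ι] [CommRing R]

lemma trace_sandwich_mul (P D r M : Matrix ι ι R) :
    trace ((P * D * r + r * D * P) * M) = trace (D * (r * M * P + P * M * r)) := by
  simp only [add_mul, mul_add, trace_add, Matrix.mul_assoc]
  rw [trace_mul_comm P, trace_mul_comm r]
  simp only [Matrix.mul_assoc]

lemma trace_sandwich_mul_conjTranspose_eq_zero [StarRing R] {P P' r D D' : Matrix ι ι R}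
    (hP' : P'ᴴ = P') (hr : rᴴ = r) (hPP' : P * P' = 0) (hP'P : P' * P = 0) (hPr : P * r = 0)
    (hrP' : r * P' = 0) :
    trace ((P * D * r + r * D * P) * (P' * D' * r + r * D' * P')ᴴ) = 0 := by
  have hadj : (P' * D' * r + r * D' * P')ᴴ = r * D'ᴴ * P' + P' * D'ᴴ * r := by
    simp only [conjTranspose_add, conjTranspose_mul, hP', hr, Matrix.mul_assoc, add_comm]
  have hmul : ∀ {A B : Matrix ι ι R}, A * B = 0 → ∀ X, A * (B * X) = 0 := fun h X => by
    rw [← Matrix.mul_assoc, h, Matrix.zero_mul]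
  rw [hadj, trace_sandwich_mul]
  simp only [mul_add, Matrix.mul_assoc, hP'P, hmul hrP', hmul hPr, hmul hPP',
    Matrix.mul_zero, Matrix.zero_mul, add_zero, trace_zero]

end TraceAlgebra

lemma integral_trace_mul_conjTranspose_swap {X ι : Type*} [MeasurableSpace X] {μ : Measure X}
    [Fintype ι] (F G : X → Matrix ι ι ℂ) :
    ∫ x, trace (F x * (G x)ᴴ) ∂μ = starRingEnd ℂ (∫ x, trace (G x * (F x)ᴴ) ∂μ) := by
  rw [← integral_conj]
  simp only [starRingEnd_apply, ← trace_conjTranspose, conjTranspose_mul,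
    conjTranspose_conjTranspose]

section GoodTerms

variable {n N : ℕ}

noncomputable def gks (q : ℤ → (Fin n → ℝ) → Matrix (Fin N) (Fin N) ℂ)
    (f : (Fin n → ℝ) → Matrix (Fin N) (Fin N) ℂ) (k s : ℤ) (x : Fin n → ℝ) :
    Matrix (Fin N) (Fin N) ℂ :=
  (q (k - 1) x - q k x) * mDiff (k + s) f x * q (k + s - 1) x +
    q (k + s - 1) x * mDiff (k + s) f x * (q (k - 1) x - q k x)

lemma trace_gks_mul_conjTranspose_eq_zero_of_add_eq
    {q : ℤ → (Fin n → ℝ) → Matrix (Fin N) (Fin N) ℂ} (hherm : ∀ k x, (q k x).IsHermitian)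
    (hdec : ∀ (j k : ℤ), j ≤ k → ∀ x, q k x * q j x = q k x ∧ q j x * q k x = q k x)
    (f : (Fin n → ℝ) → Matrix (Fin N) (Fin N) ℂ) {k k' s s' : ℤ} (hs : 1 ≤ s) (hs' : 1 ≤ s')
    (heq : k' + s' = k + s) (hne : k ≠ k') (x : Fin n → ℝ) :
    trace (gks q f k s x * (gks q f k' s' x)ᴴ) = 0 := by
  have hq : ∀ j k : ℤ, j ≤ k → q k x * q j x = q k x ∧ q j x * q k x = q k x :=
    fun j k h => hdec j k h x
  rw [gks, gks, heq]
  refine trace_sandwich_mul_conjTranspose_eq_zero ?_ (hherm _ x) (sub_mul_sub_eq_zero_of_ne hq hne)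
    (sub_mul_sub_eq_zero_of_ne hq hne.symm) (sub_mul_eq_zero_of_le hq (by omega))
    (mul_sub_eq_zero_of_le hq (by omega))
  rw [conjTranspose_sub, (hherm _ x).eq, (hherm _ x).eq]

lemma integral_trace_gks_mul_conjTranspose_eq_zero_of_lt
    {f : (Fin n → ℝ) → Matrix (Fin N) (Fin N) ℂ} (hf : ∀ a b, Integrable fun x => f x a b)
    {R : ℝ} (hsupp : Function.support f ⊆ Metric.closedBall 0 R)
    {q : ℤ → (Fin n → ℝ) → Matrix (Fin N) (Fin N) ℂ} (hq : ∀ k, DyadicAdapted k (q k))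
    {k k' s s' : ℤ} (hs : 1 ≤ s) (hs' : 1 ≤ s') (hlt : k' + s' < k + s) :
    ∫ x, trace (gks q f k s x * (gks q f k' s' x)ᴴ) = 0 := by
  set B := fun x => q (k + s - 1) x * (gks q f k' s' x)ᴴ * (q (k - 1) x - q k x) +
    (q (k - 1) x - q k x) * (gks q f k' s' x)ᴴ * q (k + s - 1) x with hB
  have hBadapted : DyadicAdapted (k + s - 1) B := fun x y hxy => by
    have hqxy : ∀ i ≤ k + s - 1, q i x = q i y := fun i hi => (hq i).mono hi hxy
    have hdf : mDiff (k' + s') f x = mDiff (k' + s') f y :=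
      (dyadicAdapted_mDiff _ f).mono (by omega) hxy
    simp only [hB, gks, hqxy (k + s - 1) le_rfl, hqxy (k - 1) (by omega), hqxy k (by omega),
      hqxy (k' - 1) (by omega), hqxy k' (by omega), hqxy (k' + s' - 1) (by omega), hdf]
  calc ∫ x, trace (gks q f k s x * (gks q f k' s' x)ᴴ)
      = ∫ x, trace (mDiff (k + s) f x * B x) := by simp only [gks, hB, trace_sandwich_mul]
    _ = 0 := integral_trace_mDiff_mul_eq_zero hf hsupp hBadapted

end GoodTerms

theorem gks_pairwise_orthogonal_general (n N : ℕ)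
    (f : (Fin n → ℝ) → Matrix (Fin N) (Fin N) ℂ)
    (hfmeas : ∀ i j, Measurable fun x => f x i j)
    (hfpos : ∀ x, Matrix.PosSemidef (f x))
    (hfbdd : ∃ C : ℝ, ∀ x, Matrix.PosSemidef (C • (1 : Matrix (Fin N) (Fin N) ℂ) - f x))
    (hfsupp : ∃ R : ℝ, ∀ x : Fin n → ℝ, R < ‖x‖ → f x = 0)
    (q : ℤ → (Fin n → ℝ) → Matrix (Fin N) (Fin N) ℂ)
    (hqproj : ∀ k x, (q k x).IsHermitian ∧ q k x * q k x = q k x)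
    (hqadapt : ∀ (k : ℤ) (x y : Fin n → ℝ),
      (∀ i, ⌊(2 : ℝ) ^ k * x i⌋ = ⌊(2 : ℝ) ^ k * y i⌋) → q k x = q k y)
    (hqdec : ∀ (j k : ℤ), j ≤ k → ∀ x,
      q k x * q j x = q k x ∧ q j x * q k x = q k x) :
    ∀ (k k' s s' : ℤ), 1 ≤ s → 1 ≤ s' → (k, s) ≠ (k', s') →
      (∫ x : Fin n → ℝ, Matrix.trace
        (((q (k - 1) x - q k x) * mDiff (k + s) f x * q (k + s - 1) x +
            q (k + s - 1) x * mDiff (k + s) f x * (q (k - 1) x - q k x)) *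
         ((q (k' - 1) x - q k' x) * mDiff (k' + s') f x * q (k' + s' - 1) x +
            q (k' + s' - 1) x * mDiff (k' + s') f x * (q (k' - 1) x - q k' x))ᴴ))
        = 0 := by
  intro k k' s s' hs hs' hne
  obtain ⟨C, hC⟩ := hfbdd
  obtain ⟨R, hR⟩ := hfsupp
  have hsupp : Function.support f ⊆ Metric.closedBall 0 R := fun x hx =>
    mem_closedBall_zero_iff.mpr (not_lt.mp fun h => hx (hR x h))
  have hf := integrable_apply_of_posSemidef hfmeas hfpos hC hsupp (μ := volume)
  have hq : ∀ k, DyadicAdapted k (q k) := fun k x y hxy => hqadapt k x y (congrFun hxy)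
  change ∫ x, trace (gks q f k s x * (gks q f k' s' x)ᴴ) = 0
  rcases lt_trichotomy (k' + s') (k + s) with hlt | heq | hgt
  · exact integral_trace_gks_mul_conjTranspose_eq_zero_of_lt hf hsupp hq hs hs' hlt
  · have hkk' : k ≠ k' := fun h => hne (Prod.ext h (by omega))
    simp only [trace_gks_mul_conjTranspose_eq_zero_of_add_eq (fun k x => (hqproj k x).1) hqdec f
      hs hs' heq hkk', integral_zero]
  · rw [integral_trace_mul_conjTranspose_swap,
      integral_trace_gks_mul_conjTranspose_eq_zero_of_lt hf hsupp hq hs' hs hgt, map_zero]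

/-- Orthogonality of the off-diagonal good terms (Paragraph 6.3.1): with `p_k = q_{k-1} - q_k`
the Cuculescu projections and `g_{k,s} = p_k df_{k+s} q_{k+s-1} + q_{k+s-1} df_{k+s} p_k`,
the family `(g_{k,s})_{k, s ≥ 1}` is pairwise orthogonal in `L₂(A)`:
`φ(g_{k,s} g_{k',s'}^*) = 0` unless `(k,s) = (k',s')`, where `φ = ∫ tr`. -/
theorem gks_pairwise_orthogonal (n N : ℕ) (lam : ℝ) (hlam : 0 < lam)
    (f : (Fin n → ℝ) → Matrix (Fin N) (Fin N) ℂ)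
    (hfmeas : ∀ i j, Measurable fun x => f x i j)
    (hfpos : ∀ x, Matrix.PosSemidef (f x))
    (hfbdd : ∃ C : ℝ, ∀ x, Matrix.PosSemidef (C • (1 : Matrix (Fin N) (Fin N) ℂ) - f x))
    (hfsupp : ∃ R : ℝ, ∀ x : Fin n → ℝ, R < ‖x‖ → f x = 0)
    (q : ℤ → (Fin n → ℝ) → Matrix (Fin N) (Fin N) ℂ)
    (hqmeas : ∀ k i j, Measurable fun x => q k x i j)
    (hqproj : ∀ k x, (q k x).IsHermitian ∧ q k x * q k x = q k x)
    (hqadapt : ∀ (k : ℤ) (x y : Fin n → ℝ),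
      (∀ i, ⌊(2 : ℝ) ^ k * x i⌋ = ⌊(2 : ℝ) ^ k * y i⌋) → q k x = q k y)
    (hqdec : ∀ (j k : ℤ), j ≤ k → ∀ x,
      q k x * q j x = q k x ∧ q j x * q k x = q k x) :
    ∀ (k k' s s' : ℤ), 1 ≤ s → 1 ≤ s' → (k, s) ≠ (k', s') →
      (∫ x : Fin n → ℝ, Matrix.trace
        (((q (k - 1) x - q k x) * mDiff (k + s) f x * q (k + s - 1) x +
            q (k + s - 1) x * mDiff (k + s) f x * (q (k - 1) x - q k x)) *
         ((q (k' - 1) x - q k' x) * mDiff (k' + s') f x * q (k' + s' - 1) x +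
            q (k' + s' - 1) x * mDiff (k' + s') f x * (q (k' - 1) x - q k' x))ᴴ))
        = 0 :=
  gks_pairwise_orthogonal_general n N f hfmeas hfpos hfbdd hfsupp q hqproj hqadapt hqdec
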